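/- arXiv:2510.14844 — 2 statements merged into one kernel-verified Lean document; each statement's English description precedes it below -/
import Mathlib

section
/- Let d, m ∈ ℕ, let 0 < ε_d ≤ 0.5, 0 < ε ≤ 0.5 and 0 < δ ≤ 0.5. Let S = {(x_1,y_1),…,(x_m,y_m)} ⊆ ℝ^d × {−1,1} satisfy Assumption(ψ, φ) with ψ ≤ 0.1 and φ ≤ ε_d/(4m). If w ∈ ℝ^d is an (ε, δ)-approximate KKT point of the margin-maximization problem w.r.t. S with multipliers λ_1,…,λ_m, then for every t ∈ [m]: (1 − 0.6·ε_d − 1.1·ε)/‖x_t‖² ≤ λ_t ≤ (1 + 1.2·ε_d + 2.15·ε + 2.2·δ)/‖x_t‖². -/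
/-!
Write `v = ∑ λ_j y_j x_j`. Near-orthogonality makes `y_i ⟪v, x_i⟫` equal to `λ_i ‖x_i‖²` up to
`φ ∑ λ_j`, and stationarity moves `w` to within `ε ‖x_i‖` of `v`; so the margin `y_i ⟪w, x_i⟫` is
`λ_i ‖x_i‖²` up to a small error. At a largest multiplier `λ_k` the error is at most `λ_k / 8`, and
complementary slackness then caps `λ_k`, hence `∑ λ_j ≤ 2.4 m` and the error is `≤ 1.05 ε + 0.6 εd`.
Feasibility gives the lower bound on `λ_t ‖x_t‖²`, complementary slackness the upper one.
-/

open Finset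
open scoped RealInnerProductSpace

section ApproxKKT

variable {ι E : Type*} [Fintype ι] [NormedAddCommGroup E] [InnerProductSpace ℝ E]
  {x : ι → E} {y lam : ι → ℝ} {w : E} {ε δ φ : ℝ}

theorem inner_sum_smul_eq_add_sum_erase [DecidableEq ι] (i : ι) :
    ⟪x i, ∑ j, (lam j * y j) • x j⟫ =
      lam i * y i * ‖x i‖ ^ 2 + ∑ j ∈ univ.erase i, lam j * y j * ⟪x i, x j⟫ := by
  simp only [inner_sum, real_inner_smul_right]
  rw [← add_sum_erase _ _ (mem_univ i), real_inner_self_eq_norm_sq]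

theorem abs_sum_erase_le [DecidableEq ι] (hy : ∀ i, |y i| = 1) (hlam : ∀ i, 0 ≤ lam i)
    (hφ : 0 ≤ φ) (hortho : ∀ i j, i ≠ j → |⟪x i, x j⟫| ≤ φ) (i : ι) :
    |∑ j ∈ univ.erase i, lam j * y j * ⟪x i, x j⟫| ≤ φ * ∑ j, lam j :=
  calc |∑ j ∈ univ.erase i, lam j * y j * ⟪x i, x j⟫|
      ≤ ∑ j ∈ univ.erase i, |lam j * y j * ⟪x i, x j⟫| := abs_sum_le_sum_abs _ _
    _ ≤ ∑ j ∈ univ.erase i, φ * lam j := by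
        refine sum_le_sum fun j hj => ?_
        rw [abs_mul, abs_mul, abs_of_nonneg (hlam j), hy j, mul_one, mul_comm φ]
        exact mul_le_mul_of_nonneg_left (hortho i j (ne_of_mem_erase hj).symm) (hlam j)
    _ ≤ ∑ j, φ * lam j :=
        sum_le_sum_of_subset_of_nonneg (erase_subset _ _) fun j _ _ => mul_nonneg hφ (hlam j)
    _ = φ * ∑ j, lam j := (mul_sum _ _ _).symm

theorem abs_margin_sub_le (hy : ∀ i, |y i| = 1) (hlam : ∀ i, 0 ≤ lam i) (hφ : 0 ≤ φ)
    (hortho : ∀ i j, i ≠ j → |⟪x i, x j⟫| ≤ φ) (hstat : ‖w - ∑ i, (lam i * y i) • x i‖ ≤ ε)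
    (i : ι) : |y i * ⟪w, x i⟫ - lam i * ‖x i‖ ^ 2| ≤ ε * ‖x i‖ + φ * ∑ j, lam j := by
  classical
  have hy2 : y i * y i = 1 := by rw [← abs_mul_abs_self, hy i, one_mul]
  have hsplit : y i * ⟪w, x i⟫ - lam i * ‖x i‖ ^ 2 =
      y i * ⟪w - ∑ j, (lam j * y j) • x j, x i⟫ +
        y i * ∑ j ∈ univ.erase i, lam j * y j * ⟪x i, x j⟫ := by
    rw [inner_sub_left, real_inner_comm (x i) (∑ j, _), inner_sum_smul_eq_add_sum_erase]
    linear_combination (lam i * ‖x i‖ ^ 2) * hy2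
  have hstep : |⟪w - ∑ j, (lam j * y j) • x j, x i⟫| ≤ ε * ‖x i‖ :=
    (abs_real_inner_le_norm _ _).trans (mul_le_mul_of_nonneg_right hstat (norm_nonneg _))
  rw [hsplit]
  refine (abs_add_le _ _).trans (add_le_add ?_ ?_) <;> rw [abs_mul, hy i, one_mul]
  · exact hstep
  · exact abs_sum_erase_le hy hlam hφ hortho i

theorem sum_multipliers_le (hy : ∀ i, |y i| = 1) (hlam : ∀ i, 0 ≤ lam i) (hφ : 0 ≤ φ)
    (hφcard : φ * Fintype.card ι ≤ 1 / 8) (hortho : ∀ i j, i ≠ j → |⟪x i, x j⟫| ≤ φ)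
    (hnorm_ge : ∀ i, 0.9 ≤ ‖x i‖ ^ 2) (hnorm_le : ∀ i, ‖x i‖ ≤ 1.05)
    (hε : ε ≤ 0.5) (hδ : δ ≤ 0.5) (hstat : ‖w - ∑ i, (lam i * y i) • x i‖ ≤ ε)
    (hcs : ∀ i, lam i * (y i * ⟪w, x i⟫ - 1) ≤ δ) :
    ∑ j, lam j ≤ 2.4 * Fintype.card ι := by
  cases isEmpty_or_nonempty ι
  · simp
  obtain ⟨k, -, hk⟩ := exists_max_image univ lam univ_nonempty
  have hsum : ∑ j, lam j ≤ Fintype.card ι * lam k := by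
    simpa using sum_le_sum fun j hj => hk j hj
  have hcross : φ * ∑ j, lam j ≤ lam k / 8 := by
    nlinarith [mul_le_mul_of_nonneg_left hsum hφ, hlam k]
  have hε0 : 0 ≤ ε := (norm_nonneg _).trans hstat
  have hmargin : 0.775 * lam k - 0.525 ≤ y k * ⟪w, x k⟫ := by
    nlinarith [(abs_le.1 (abs_margin_sub_le hy hlam hφ hortho hstat k)).1,
      mul_le_mul_of_nonneg_left (hnorm_ge k) (hlam k), mul_le_mul_of_nonneg_left (hnorm_le k) hε0]
  -- `λ_k (0.775 λ_k - 1.525) ≤ δ ≤ 0.5` forces `λ_k < 2.26`.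
  have hlamk : lam k ≤ 2.4 := by nlinarith [hcs k, hlam k]
  nlinarith

end ApproxKKT

theorem mul_le_of_complementary_slackness {lam a N r c δ : ℝ} (hlam : 0 ≤ lam) (ha : 1 ≤ a)
    (hr : 0 ≤ r) (hc : 0 ≤ c) (hN : N ≤ c) (hcs : lam * (a - 1) ≤ δ) (hdev : lam * N - r ≤ a) :
    lam * N ≤ 1 + r + c * δ := by
  have hδ : 0 ≤ δ := (mul_nonneg hlam (sub_nonneg.2 ha)).trans hcs
  by_contra! h
  have hlamc : 1 ≤ lam * c := by nlinarith [mul_le_mul_of_nonneg_left hN hlam, mul_nonneg hc hδ]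
  have hslack : c * δ < a - 1 := by nlinarith [mul_nonneg hc hδ]
  have hlam_pos : 0 < lam := by nlinarith
  nlinarith [mul_lt_mul_of_pos_left hslack hlam_pos]

theorem stmt_12_general
    (d m : ℕ)
    (ε δ εd ψ φ : ℝ)
    (hεdpos : 0 < εd) (hεdle : εd ≤ 0.5)
    (hεle : ε ≤ 0.5)
    (hδle : δ ≤ 0.5)
    (hψ : ψ ≤ 0.1) (hφ : φ ≤ εd / (4 * m))
    (x : Fin m → EuclideanSpace ℝ (Fin d)) (y : Fin m → ℝ)
    (hy : ∀ i, y i = 1 ∨ y i = -1)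
    (hnorm : ∀ i, 1 - ψ ≤ ‖x i‖ ^ 2 ∧ ‖x i‖ ^ 2 ≤ 1 + ψ)
    (hortho : ∀ i j, i ≠ j → |(inner ℝ (x i) (x j) : ℝ)| ≤ φ)
    (w : EuclideanSpace ℝ (Fin d)) (lam : Fin m → ℝ)
    (hlam : ∀ i, 0 ≤ lam i)
    (hstat : ‖w - ∑ i, (lam i * y i) • x i‖ ≤ ε)
    (hcs : ∀ i, lam i * (y i * (inner ℝ w (x i) : ℝ) - 1) ≤ δ)
    (hpf : ∀ i, 1 ≤ y i * (inner ℝ w (x i) : ℝ)) :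
    ∀ t, (1 - 0.6 * εd - 1.1 * ε) / ‖x t‖ ^ 2 ≤ lam t ∧
      lam t ≤ (1 + 1.2 * εd + 2.15 * ε + 2.2 * δ) / ‖x t‖ ^ 2 := by
  intro t
  have hm : (0 : ℝ) < m := Nat.cast_pos.2 t.pos
  have hy' : ∀ i, |y i| = 1 := fun i => by rcases hy i with h | h <;> simp [h]
  have hortho' : ∀ i j, i ≠ j → |⟪x i, x j⟫| ≤ εd / (4 * m) :=
    fun i j hij => (hortho i j hij).trans hφ
  have hφ0 : 0 ≤ εd / (4 * m) := by positivity
  have hnorm_le : ∀ i, ‖x i‖ ≤ 1.05 := fun i => by nlinarith [hnorm i, norm_nonneg (x i)]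
  have hΛ : ∑ j, lam j ≤ 2.4 * m := by
    simpa using sum_multipliers_le hy' hlam hφ0
      (by rw [Fintype.card_fin]; field_simp; linarith) hortho'
      (fun i => by linarith [hnorm i]) hnorm_le hεle hδle hstat hcs
  have hε0 : 0 ≤ ε := (norm_nonneg _).trans hstat
  have hdev : |y t * ⟪w, x t⟫ - lam t * ‖x t‖ ^ 2| ≤ 1.05 * ε + 0.6 * εd := by
    refine (abs_margin_sub_le hy' hlam hφ0 hortho' hstat t).trans (add_le_add ?_ ?_)
    · nlinarith [hnorm_le t]
    · calc εd / (4 * m) * ∑ j, lam j ≤ εd / (4 * m) * (2.4 * m) := by gcongr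
        _ = 0.6 * εd := by field_simp; ring
  have hN : 0 < ‖x t‖ ^ 2 := by linarith [hnorm t]
  obtain ⟨hdev_lo, hdev_hi⟩ := abs_le.1 hdev
  constructor
  · rw [div_le_iff₀ hN]
    linarith [hpf t]
  · rw [le_div_iff₀ hN]
    have hupper := mul_le_of_complementary_slackness (N := ‖x t‖ ^ 2) (c := 1.1) (hlam t) (hpf t)
      (by linarith : 0 ≤ 1.05 * ε + 0.6 * εd) (by norm_num) (by linarith [hnorm t]) (hcs t)
      (by linarith)
    have hδ0 : 0 ≤ δ := (mul_nonneg (hlam t) (sub_nonneg.2 (hpf t))).trans (hcs t)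
    linarith

/-- Two-sided bounds on every KKT multiplier of a linear approximate KKT
point on a nearly-orthogonal dataset:
`(1 - 0.6 εd - 1.1 ε)/‖x_t‖² ≤ λ_t ≤ (1 + 1.2 εd + 2.15 ε + 2.2 δ)/‖x_t‖²`. -/
theorem stmt_12
    (d m : ℕ)
    (ε δ εd ψ φ : ℝ)
    (hεdpos : 0 < εd) (hεdle : εd ≤ 0.5)
    (hεpos : 0 < ε) (hεle : ε ≤ 0.5)
    (hδpos : 0 < δ) (hδle : δ ≤ 0.5)
    (hψ : ψ ≤ 0.1) (hφ : φ ≤ εd / (4 * m))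
    (x : Fin m → EuclideanSpace ℝ (Fin d)) (y : Fin m → ℝ)
    (hy : ∀ i, y i = 1 ∨ y i = -1)
    (hnorm : ∀ i, 1 - ψ ≤ ‖x i‖ ^ 2 ∧ ‖x i‖ ^ 2 ≤ 1 + ψ)
    (hortho : ∀ i j, i ≠ j → |(inner ℝ (x i) (x j) : ℝ)| ≤ φ)
    (w : EuclideanSpace ℝ (Fin d)) (lam : Fin m → ℝ)
    (hlam : ∀ i, 0 ≤ lam i)
    (hstat : ‖w - ∑ i, (lam i * y i) • x i‖ ≤ ε)
    (hcs : ∀ i, lam i * (y i * (inner ℝ w (x i) : ℝ) - 1) ≤ δ)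
    (hpf : ∀ i, 1 ≤ y i * (inner ℝ w (x i) : ℝ)) :
    ∀ t, (1 - 0.6 * εd - 1.1 * ε) / ‖x t‖ ^ 2 ≤ lam t ∧
      lam t ≤ (1 + 1.2 * εd + 2.15 * ε + 2.2 * δ) / ‖x t‖ ^ 2 :=
  stmt_12_general d m ε δ εd ψ φ hεdpos hεdle hεle hδle hψ hφ x y hy hnorm hortho w lam hlam hstat
    hcs hpf
end

section
/- Let n, d, m ∈ ℕ, let 0 < ε_d ≤ 0.4, 0 < ε ≤ 0.4, 0 < δ ≤ 0.4, and fix u_1,…,u_n ∈ {−1/√n, 1/√n}. Let S satisfy Assumption(ψ, φ) with ψ ≤ 0.1 and φ ≤ ε_d/(4mn), and suppose θ = (w_1,…,w_n) is an (ε, δ)-approximate KKT point of the margin-maximization problem w.r.t. S with multipliers λ_1,…,λ_m. Fix l ∈ [m], set c = ε_d/(2mn), Δ_j = c·Σ_{k∈[m], k≠l} sign(⟨x_k, w_j⟩)·x_k, ŵ_j = w_j − u_j λ_l y_l σ'_{l,j}(θ) x_l, and w̃_j = ŵ_j + |u_j| λ_l σ'_{l,j}(θ) Δ_j, with θ̃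 = (w̃_1,…,w̃_n). Then for every r ∈ [m] with r ≠ l: −9·ε_d/(m·n) ≤ y_r·(N(θ̃, x_r) − N(θ, x_r)) ≤ 9·ε_d/(m·n). -/
/-- ReLU activation-pattern indicator: `σ'(w, x) = 1` if `⟨w, x⟩ ≥ 0` and `0` otherwise. -/
noncomputable def act {d : ℕ} (w x : EuclideanSpace ℝ (Fin d)) : ℝ :=
  if 0 ≤ (inner ℝ w x : ℝ) then 1 else 0

/-- Two-layer ReLU network with fixed second layer `u` and first-layer weights `θ`. -/
noncomputable def net {n d : ℕ} (u : Fin n → ℝ)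
    (θ : Fin n → EuclideanSpace ℝ (Fin d)) (x : EuclideanSpace ℝ (Fin d)) : ℝ :=
  ∑ j, u j * max ((inner ℝ (θ j) x : ℝ)) 0

/-- `sign(z) = 1` if `z ≥ 0`, and `-1` otherwise. -/
noncomputable def sgn (z : ℝ) : ℝ := if 0 ≤ z then 1 else -1

/-!
Stationarity makes `w_j` close to `u_j Σ_i λ_i y_i σ'_{i,j} x_i`, so by near-orthogonality of the
data the margin of `x_p` is at least about `λ_p A_p - φ Σ_i λ_i A_i - ε`, where
`A_p = Σ_j u_j² σ'_{p,j}` is the active share of the second layer. Applied at the index maximising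
`λ_i A_i`, complementary slackness then bounds every `λ_i A_i` by an absolute constant. The
correction `θ̃ - θ` only moves the neurons active at `x_l`, and only along `x_l` and a vector of
size `O(ε_d/(mn))` against `x_r`; since ReLU is 1-Lipschitz, the margin at `x_r` changes by at
most `λ_l A_l (φ + O(ε_d/(mn))) = O(ε_d/(mn))`.
-/

open Finset RealInnerProductSpace

theorem abs_sum_mul_inner_sub_le {E ι : Type*} [NormedAddCommGroup E] [InnerProductSpace ℝ E]
    [DecidableEq ι] {s : Finset ι} {p : ι} (hp : p ∈ s) (x : ι → E) (a : ι → ℝ)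
    {φ : ℝ} (hx : ∀ i ∈ s, i ≠ p → |⟪x i, x p⟫| ≤ φ) :
    |∑ i ∈ s, a i * ⟪x i, x p⟫ - a p * ‖x p‖ ^ 2| ≤ φ * ∑ i ∈ s.erase p, |a i| := by
  rw [← add_sum_erase s _ hp, real_inner_self_eq_norm_sq, add_sub_cancel_left, mul_sum]
  refine (abs_sum_le_sum_abs _ _).trans (sum_le_sum fun i hi => ?_)
  obtain ⟨hip, his⟩ := mem_erase.mp hi
  rw [abs_mul, mul_comm φ]
  exact mul_le_mul_of_nonneg_left (hx i his hip) (abs_nonneg _)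

theorem sum_abs_mul_norm_le {ι E : Type*} [SeminormedAddCommGroup E] (s : Finset ι) {u : ι → ℝ}
    (hu : ∑ j ∈ s, u j ^ 2 = 1) (f : ι → E) :
    ∑ j ∈ s, |u j| * ‖f j‖ ≤ √(∑ j ∈ s, ‖f j‖ ^ 2) := by
  simpa [sq_abs, hu] using Real.sum_mul_le_sqrt_mul_sqrt s (fun j => |u j|) (fun j => ‖f j‖)

theorem abs_sgn (z : ℝ) : |sgn z| = 1 := by
  unfold sgn; split <;> simp

section Network

variable {n d m : ℕ}

theorem act_nonneg (w z : EuclideanSpace ℝ (Fin d)) : 0 ≤ act w z := by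
  unfold act; split <;> norm_num

theorem act_le_one (w z : EuclideanSpace ℝ (Fin d)) : act w z ≤ 1 := by
  unfold act; split <;> norm_num

theorem act_mul_self (w z : EuclideanSpace ℝ (Fin d)) : act w z * act w z = act w z := by
  unfold act; split <;> norm_num

theorem max_inner_zero_eq_act_mul (w z : EuclideanSpace ℝ (Fin d)) :
    max ⟪w, z⟫ 0 = act w z * ⟪w, z⟫ := by
  unfold act; split
  · rw [max_eq_left ‹_›, one_mul]
  · rw [max_eq_right (not_le.mp ‹_›).le, zero_mul]

theorem net_eq_sum_act_mul_inner (u : Fin n → ℝ) (θ : Fin n → EuclideanSpace ℝ (Fin d))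
    (z : EuclideanSpace ℝ (Fin d)) :
    net u θ z = ∑ j, u j * (act (θ j) z * ⟪θ j, z⟫) := by
  simp only [net, max_inner_zero_eq_act_mul]

theorem abs_net_sub_net_le (u : Fin n → ℝ) (θ' θ : Fin n → EuclideanSpace ℝ (Fin d))
    (z : EuclideanSpace ℝ (Fin d)) :
    |net u θ' z - net u θ z| ≤ ∑ j, |u j| * |⟪θ' j, z⟫ - ⟪θ j, z⟫| := by
  rw [net, net, ← sum_sub_distrib]
  refine (abs_sum_le_sum_abs _ _).trans (sum_le_sum fun j _ => ?_)
  rw [← mul_sub, abs_mul]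
  exact mul_le_mul_of_nonneg_left (abs_max_sub_max_le_abs _ _ _) (abs_nonneg _)

/-- KKT stationarity (ii) asks `w_j` to be close to `kktWeight u lam y x θ j`. -/
noncomputable def kktWeight (u : Fin n → ℝ) (lam y : Fin m → ℝ)
    (x : Fin m → EuclideanSpace ℝ (Fin d)) (θ : Fin n → EuclideanSpace ℝ (Fin d)) (j : Fin n) :
    EuclideanSpace ℝ (Fin d) :=
  u j • ∑ i, (lam i * y i * act (θ j) (x i)) • x i

noncomputable def activeMass (u : Fin n → ℝ) (θ : Fin n → EuclideanSpace ℝ (Fin d))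
    (z : EuclideanSpace ℝ (Fin d)) : ℝ :=
  ∑ j, u j ^ 2 * act (θ j) z

theorem activeMass_nonneg (u : Fin n → ℝ) (θ : Fin n → EuclideanSpace ℝ (Fin d))
    (z : EuclideanSpace ℝ (Fin d)) : 0 ≤ activeMass u θ z :=
  sum_nonneg fun _ _ => mul_nonneg (sq_nonneg _) (act_nonneg _ _)

theorem activeMass_le_one {u : Fin n → ℝ} (hu : ∑ j, u j ^ 2 = 1)
    (θ : Fin n → EuclideanSpace ℝ (Fin d)) (z : EuclideanSpace ℝ (Fin d)) :
    activeMass u θ z ≤ 1 :=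
  hu ▸ sum_le_sum fun _ _ => mul_le_of_le_one_right (sq_nonneg _) (act_le_one _ _)

theorem inner_kktWeight (u : Fin n → ℝ) (lam y : Fin m → ℝ)
    (x : Fin m → EuclideanSpace ℝ (Fin d)) (θ : Fin n → EuclideanSpace ℝ (Fin d)) (j : Fin n)
    (z : EuclideanSpace ℝ (Fin d)) :
    ⟪kktWeight u lam y x θ j, z⟫ = u j * ∑ i, lam i * y i * act (θ j) (x i) * ⟪x i, z⟫ := by
  simp only [kktWeight, real_inner_smul_left, sum_inner]

end Network

section Margin

variable {n d m : ℕ} (u : Fin n → ℝ) {lam y : Fin m → ℝ} {x : Fin m → EuclideanSpace ℝ (Fin d)}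
  (θ : Fin n → EuclideanSpace ℝ (Fin d)) {φ : ℝ} {p : Fin m}

theorem le_mul_inner_kktWeight (hy : ∀ i, |y i| = 1) (hlam : ∀ i, 0 ≤ lam i) (hφ : 0 ≤ φ)
    (hx : ∀ i, i ≠ p → |⟪x i, x p⟫| ≤ φ) (j : Fin n) :
    lam p * ‖x p‖ ^ 2 * (u j ^ 2 * act (θ j) (x p))
        - φ * ∑ i ∈ univ.erase p, lam i * (u j ^ 2 * act (θ j) (x i))
      ≤ y p * u j * act (θ j) (x p) * ⟪kktWeight u lam y x θ j, x p⟫ := by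
  set σ := act (θ j) (x p)
  set a : Fin m → ℝ := fun i => lam i * y i * y p * act (θ j) (x i)
  have hyp : y p * y p = 1 := by rw [← sq, ← sq_abs, hy p, one_pow]
  have ha : ∀ i, |a i| = lam i * act (θ j) (x i) := fun i => by
    simp only [a, abs_mul, hy, abs_of_nonneg (hlam i), abs_of_nonneg (act_nonneg _ _), mul_one]
  have hap : a p = lam p * σ := by
    simp only [a, σ]; linear_combination lam p * act (θ j) (x p) * hyp
  have hS : lam p * σ * ‖x p‖ ^ 2 - φ * ∑ i ∈ univ.erase p, lam i * act (θ j) (x i)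
      ≤ ∑ i, a i * ⟪x i, x p⟫ := by
    have h := neg_le_of_abs_le (abs_sum_mul_inner_sub_le (mem_univ p) x a fun i _ => hx i)
    simp only [ha, hap] at h
    linarith
  have hrw : y p * u j * σ * ⟪kktWeight u lam y x θ j, x p⟫
      = u j ^ 2 * σ * ∑ i, a i * ⟪x i, x p⟫ := by
    simp only [inner_kktWeight, mul_sum, a]
    exact sum_congr rfl fun i _ => by ring
  have hσ : σ * σ = σ := act_mul_self _ _
  have hsum : 0 ≤ φ * ∑ i ∈ univ.erase p, lam i * act (θ j) (x i) :=
    mul_nonneg hφ (sum_nonneg fun i _ => mul_nonneg (hlam i) (act_nonneg _ _))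
  have hmain := mul_le_mul_of_nonneg_left hS (mul_nonneg (sq_nonneg (u j)) (act_nonneg (θ j) (x p)))
  have hshrink : u j ^ 2 * σ * (φ * ∑ i ∈ univ.erase p, lam i * act (θ j) (x i))
      ≤ u j ^ 2 * (φ * ∑ i ∈ univ.erase p, lam i * act (θ j) (x i)) :=
    mul_le_mul_of_nonneg_right (mul_le_of_le_one_right (sq_nonneg _) (act_le_one _ _)) hsum
  have hpull : φ * ∑ i ∈ univ.erase p, lam i * (u j ^ 2 * act (θ j) (x i))
      = u j ^ 2 * (φ * ∑ i ∈ univ.erase p, lam i * act (θ j) (x i)) := by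
    simp only [mul_sum]; exact sum_congr rfl fun i _ => by ring
  rw [hrw, hpull]
  linear_combination hmain + hshrink - lam p * ‖x p‖ ^ 2 * u j ^ 2 * hσ

theorem le_mul_net (hy : ∀ i, |y i| = 1) (hlam : ∀ i, 0 ≤ lam i) (hφ : 0 ≤ φ)
    (hx : ∀ i, i ≠ p → |⟪x i, x p⟫| ≤ φ) :
    lam p * ‖x p‖ ^ 2 * activeMass u θ (x p)
        - φ * ∑ i ∈ univ.erase p, lam i * activeMass u θ (x i)
        - ‖x p‖ * ∑ j, |u j| * ‖θ j - kktWeight u lam y x θ j‖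
      ≤ y p * net u θ (x p) := by
  have hsplit : ∀ j, y p * (u j * (act (θ j) (x p) * ⟪θ j, x p⟫))
      = y p * u j * act (θ j) (x p) * ⟪kktWeight u lam y x θ j, x p⟫
        + y p * u j * act (θ j) (x p) * ⟪θ j - kktWeight u lam y x θ j, x p⟫ := fun j => by
    rw [inner_sub_left]; ring
  have herr : ∀ j, |y p * u j * act (θ j) (x p) * ⟪θ j - kktWeight u lam y x θ j, x p⟫|
      ≤ ‖x p‖ * (|u j| * ‖θ j - kktWeight u lam y x θ j‖) := fun j => by
    rw [abs_mul, abs_mul, abs_mul, hy, one_mul, abs_of_nonneg (act_nonneg _ _)]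
    calc |u j| * act (θ j) (x p) * |⟪θ j - kktWeight u lam y x θ j, x p⟫|
        ≤ |u j| * 1 * (‖θ j - kktWeight u lam y x θ j‖ * ‖x p‖) := by
          gcongr
          · exact act_le_one _ _
          · exact abs_real_inner_le_norm _ _
      _ = _ := by ring
  have hswap : ∑ i ∈ univ.erase p, lam i * activeMass u θ (x i)
      = ∑ j, ∑ i ∈ univ.erase p, lam i * (u j ^ 2 * act (θ j) (x i)) := by
    simp only [activeMass, mul_sum]; exact sum_comm
  rw [hswap, activeMass, net_eq_sum_act_mul_inner, mul_sum, mul_sum, mul_sum, mul_sum,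
    ← sum_sub_distrib, ← sum_sub_distrib]
  refine sum_le_sum fun j _ => ?_
  rw [hsplit]
  linarith [le_mul_inner_kktWeight u θ hy hlam hφ hx j, neg_le_of_abs_le (herr j)]

end Margin

theorem mul_activeMass_le_of_kkt {n d m : ℕ} {u : Fin n → ℝ} {lam y : Fin m → ℝ}
    {x : Fin m → EuclideanSpace ℝ (Fin d)} {θ : Fin n → EuclideanSpace ℝ (Fin d)} {φ : ℝ}
    (hu : ∑ j, u j ^ 2 = 1) (hy : ∀ i, |y i| = 1)
    (hx : ∀ i, 0.9 ≤ ‖x i‖ ^ 2 ∧ ‖x i‖ ^ 2 ≤ 1.1)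
    (hortho : ∀ i j, i ≠ j → |⟪x i, x j⟫| ≤ φ) (hφ : 0 ≤ φ) (hφm : φ * m ≤ 0.1)
    (hlam : ∀ i, 0 ≤ lam i)
    (hstat : ∑ j, |u j| * ‖θ j - kktWeight u lam y x θ j‖ ≤ 0.4)
    (hcs : ∀ i, lam i * (y i * net u θ (x i) - 1) ≤ 0.4) (i : Fin m) :
    lam i * activeMass u θ (x i) ≤ 2.3 := by
  obtain ⟨p, -, hp⟩ :=
    exists_max_image univ (fun i => lam i * activeMass u θ (x i)) ⟨i, mem_univ i⟩
  refine (hp i (mem_univ i)).trans ?_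
  have hA0 := activeMass_nonneg u θ (x p)
  have hA1 := activeMass_le_one hu θ (x p)
  have hT0 : 0 ≤ lam p * activeMass u θ (x p) := mul_nonneg (hlam p) hA0
  have hrest : ∑ i ∈ univ.erase p, lam i * activeMass u θ (x i)
      ≤ m * (lam p * activeMass u θ (x p)) := by
    refine (sum_le_card_nsmul _ _ _ fun i _ => hp i (mem_univ i)).trans ?_
    rw [nsmul_eq_mul]
    gcongr
    exact_mod_cast (card_erase_le).trans (card_univ.trans (Fintype.card_fin m)).le
  have hnorm_le : ‖x p‖ ≤ 1.05 := by nlinarith [sq_nonneg (‖x p‖ - 1), (hx p).2]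
  have herr : ‖x p‖ * ∑ j, |u j| * ‖θ j - kktWeight u lam y x θ j‖ ≤ 1.05 * 0.4 :=
    mul_le_mul hnorm_le hstat (sum_nonneg fun _ _ => by positivity) (by norm_num)
  have hmargin := le_mul_net u θ hy hlam hφ fun i hi => hortho i p hi
  have hmain :
      0.9 * (lam p * activeMass u θ (x p)) ≤ lam p * ‖x p‖ ^ 2 * activeMass u θ (x p) := by
    nlinarith [(hx p).1]
  have hcross : φ * ∑ i ∈ univ.erase p, lam i * activeMass u θ (x i)
      ≤ 0.1 * (lam p * activeMass u θ (x p)) := by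
    nlinarith [mul_le_mul_of_nonneg_left hrest hφ]
  -- Otherwise `λ_p ≥ λ_p A_p > 2.3` while `y_p N(θ, x_p) - 1 > 0.42`, against slackness.
  by_contra! hbig
  nlinarith [hcs p, mul_le_of_le_one_right (hlam p) hA1]

theorem abs_sum_sgn_mul_inner_le {d m : ℕ} {x : Fin m → EuclideanSpace ℝ (Fin d)} {φ : ℝ}
    (hortho : ∀ i j, i ≠ j → |⟪x i, x j⟫| ≤ φ) (hφ : 0 ≤ φ) {l r : Fin m} (hrl : r ≠ l)
    (w : EuclideanSpace ℝ (Fin d)) :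
    |∑ k ∈ univ.erase l, sgn ⟪x k, w⟫ * ⟪x k, x r⟫| ≤ ‖x r‖ ^ 2 + m * φ := by
  have hr : r ∈ univ.erase l := mem_erase.mpr ⟨hrl, mem_univ r⟩
  have h := abs_sum_mul_inner_sub_le hr x (fun k => sgn ⟪x k, w⟫) fun i _ hi => hortho i r hi
  simp only [abs_sgn, sum_const, nsmul_one] at h
  have hcard : (((univ.erase l).erase r).card : ℝ) ≤ m := by
    exact_mod_cast card_erase_le.trans <|
      card_erase_le.trans (card_univ.trans (Fintype.card_fin m)).le
  have hsgn : |sgn ⟪x r, w⟫ * ‖x r‖ ^ 2| = ‖x r‖ ^ 2 := by rw [abs_mul, abs_sgn, one_mul, abs_sq]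
  have := abs_sub_abs_le_abs_sub (∑ k ∈ univ.erase l, sgn ⟪x k, w⟫ * ⟪x k, x r⟫)
    (sgn ⟪x r, w⟫ * ‖x r‖ ^ 2)
  nlinarith

theorem abs_inner_unlearn_sub_le {d m : ℕ} {lam y : Fin m → ℝ}
    {x : Fin m → EuclideanSpace ℝ (Fin d)} {w wt : EuclideanSpace ℝ (Fin d)} {a c φ : ℝ}
    {l r : Fin m} (hy : |y l| = 1) (hlam : 0 ≤ lam l) (hc : 0 ≤ c)
    (hortho : ∀ i j, i ≠ j → |⟪x i, x j⟫| ≤ φ) (hφ : 0 ≤ φ) (hrl : r ≠ l)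
    (hwt : wt = (w - (a * lam l * y l * act w (x l)) • x l) +
        (|a| * lam l * act w (x l)) • (c • ∑ k ∈ univ.erase l, sgn ⟪x k, w⟫ • x k)) :
    |⟪wt, x r⟫ - ⟪w, x r⟫| ≤ |a| * (lam l * act w (x l)) * (φ + c * (‖x r‖ ^ 2 + m * φ)) := by
  have hb : 0 ≤ |a| * lam l * act w (x l) := by have := act_nonneg w (x l); positivity
  have hdiff : ⟪wt, x r⟫ - ⟪w, x r⟫
      = -(a * lam l * y l * act w (x l) * ⟪x l, x r⟫)
        + |a| * lam l * act w (x l) * (c * ∑ k ∈ univ.erase l, sgn ⟪x k, w⟫ * ⟪x k, x r⟫) := by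
    simp only [hwt, inner_add_left, inner_sub_left, real_inner_smul_left, sum_inner]
    ring
  have h1 : |a * lam l * y l * act w (x l) * ⟪x l, x r⟫| ≤ |a| * (lam l * act w (x l)) * φ := by
    rw [abs_mul, abs_mul, abs_mul, abs_mul, hy, abs_of_nonneg hlam,
      abs_of_nonneg (act_nonneg w (x l)), mul_one, ← mul_assoc]
    gcongr
    exact hortho l r hrl.symm
  have h2 : |c * ∑ k ∈ univ.erase l, sgn ⟪x k, w⟫ * ⟪x k, x r⟫| ≤ c * (‖x r‖ ^ 2 + m * φ) := by
    rw [abs_mul, abs_of_nonneg hc]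
    exact mul_le_mul_of_nonneg_left (abs_sum_sgn_mul_inner_le hortho hφ hrl w) hc
  rw [hdiff]
  refine (abs_add_le _ _).trans ?_
  rw [abs_neg, abs_mul (|a| * lam l * act w (x l)), abs_of_nonneg hb]
  nlinarith [mul_le_mul_of_nonneg_left h2 hb]

theorem abs_net_sub_net_le_of_unlearn {n d m : ℕ} {u : Fin n → ℝ} {lam y : Fin m → ℝ}
    {x : Fin m → EuclideanSpace ℝ (Fin d)} {θ θt : Fin n → EuclideanSpace ℝ (Fin d)} {c φ : ℝ}
    {l r : Fin m} (hy : |y l| = 1) (hlam : 0 ≤ lam l) (hc : 0 ≤ c)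
    (hortho : ∀ i j, i ≠ j → |⟪x i, x j⟫| ≤ φ) (hφ : 0 ≤ φ) (hrl : r ≠ l)
    (hθt : ∀ j, θt j = (θ j - (u j * lam l * y l * act (θ j) (x l)) • x l) +
        (|u j| * lam l * act (θ j) (x l)) • (c • ∑ k ∈ univ.erase l, sgn ⟪x k, θ j⟫ • x k)) :
    |net u θt (x r) - net u θ (x r)|
      ≤ lam l * activeMass u θ (x l) * (φ + c * (‖x r‖ ^ 2 + m * φ)) :=
  calc |net u θt (x r) - net u θ (x r)| ≤ ∑ j, |u j| * |⟪θt j, x r⟫ - ⟪θ j, x r⟫| :=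
        abs_net_sub_net_le u θt θ (x r)
    _ ≤ ∑ j, |u j| * (|u j| * (lam l * act (θ j) (x l)) * (φ + c * (‖x r‖ ^ 2 + m * φ))) :=
        sum_le_sum fun j _ => mul_le_mul_of_nonneg_left
          (abs_inner_unlearn_sub_le hy hlam hc hortho hφ hrl (hθt j)) (abs_nonneg _)
    _ = lam l * activeMass u θ (x l) * (φ + c * (‖x r‖ ^ 2 + m * φ)) := by
        simp only [activeMass, mul_sum, sum_mul]
        exact sum_congr rfl fun j _ => by rw [← sq_abs (u j)]; ring

theorem sum_sq_eq_one_of_eq_pm_inv_sqrt {n : ℕ} (hn : 0 < n) {u : Fin n → ℝ}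
    (hu : ∀ j, u j = -(1 / √n) ∨ u j = 1 / √n) : ∑ j, u j ^ 2 = 1 := by
  have hsq : ∀ j, u j ^ 2 = 1 / n := fun j => by
    rcases hu j with h | h <;> simp [h, Real.sq_sqrt (Nat.cast_nonneg n)]
  simp only [hsq, sum_const, card_univ, Fintype.card_fin, nsmul_eq_mul]
  field_simp

theorem stmt_16_general
    (n d m : ℕ)
    (ε δ εd ψ φ : ℝ)
    (hεdpos : 0 < εd) (hεdle : εd ≤ 0.4)
    (hεle : ε ≤ 0.4)
    (hδle : δ ≤ 0.4)
    (hψ : ψ ≤ 0.1) (hφ : φ ≤ εd / (4 * m * n))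
    (u : Fin n → ℝ)
    (hu : ∀ j, u j = -(1 / Real.sqrt n) ∨ u j = 1 / Real.sqrt n)
    (x : Fin m → EuclideanSpace ℝ (Fin d)) (y : Fin m → ℝ)
    (hy : ∀ i, y i = 1 ∨ y i = -1)
    (hnorm : ∀ i, 1 - ψ ≤ ‖x i‖ ^ 2 ∧ ‖x i‖ ^ 2 ≤ 1 + ψ)
    (hortho : ∀ i j, i ≠ j → |(inner ℝ (x i) (x j) : ℝ)| ≤ φ)
    (θ : Fin n → EuclideanSpace ℝ (Fin d)) (lam : Fin m → ℝ)
    (hlam : ∀ i, 0 ≤ lam i)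
    (hstat : Real.sqrt (∑ j, ‖θ j - u j • ∑ i, (lam i * y i * act (θ j) (x i)) • x i‖ ^ 2) ≤ ε)
    (hcs : ∀ i, lam i * (y i * net u θ (x i) - 1) ≤ δ)
    (l : Fin m)
    (θt : Fin n → EuclideanSpace ℝ (Fin d))
    (hθt : ∀ j, θt j = (θ j - (u j * lam l * y l * act (θ j) (x l)) • x l) +
        (|u j| * lam l * act (θ j) (x l)) •
          ((εd / (2 * m * n)) •
            ∑ k ∈ Finset.univ.erase l, sgn ((inner ℝ (x k) (θ j) : ℝ)) • x k)) :
    ∀ r, r ≠ l →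
      -(9 * εd / (m * n)) ≤ y r * (net u θt (x r) - net u θ (x r)) ∧
      y r * (net u θt (x r) - net u θ (x r)) ≤ 9 * εd / (m * n) := by
  intro r hrl
  rcases Nat.eq_zero_or_pos n with rfl | hn
  · simp [net]
  have hyabs : ∀ i, |y i| = 1 := fun i => by rcases hy i with h | h <;> simp [h]
  have hφ0 : 0 ≤ φ := (abs_nonneg _).trans (hortho r l hrl)
  have hm : (0 : ℝ) < m := by exact_mod_cast Fin.pos r
  have hn' : (1 : ℝ) ≤ n := by exact_mod_cast hn
  have hφm : φ * m ≤ 0.1 := by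
    rw [le_div_iff₀ (by positivity)] at hφ
    nlinarith
  have hu2 := sum_sq_eq_one_of_eq_pm_inv_sqrt hn hu
  have hT := mul_activeMass_le_of_kkt hu2 hyabs
    (fun i => ⟨by linarith [(hnorm i).1], by linarith [(hnorm i).2]⟩) hortho hφ0 hφm hlam
    ((sum_abs_mul_norm_le univ hu2 _).trans (hstat.trans hεle)) (fun i => (hcs i).trans hδle) l
  have hdiff := abs_net_sub_net_le_of_unlearn (hyabs l) (hlam l) (by positivity) hortho hφ0 hrl hθt
  rw [← abs_le, abs_mul, hyabs r, one_mul]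
  have hK : 0 ≤ εd / (m * n) := by positivity
  have hB : φ + εd / (2 * m * n) * (‖x r‖ ^ 2 + m * φ) ≤ 0.85 * (εd / (m * n)) := by
    have hc : εd / (2 * m * n) = εd / (m * n) / 2 := by ring
    have hφK : φ ≤ εd / (m * n) / 4 := hφ.trans_eq (by ring)
    rw [hc]
    nlinarith [(hnorm r).2]
  calc |net u θt (x r) - net u θ (x r)|
      ≤ lam l * activeMass u θ (x l) * (φ + εd / (2 * m * n) * (‖x r‖ ^ 2 + m * φ)) := hdiff
    _ ≤ 2.3 * (0.85 * (εd / (m * n))) := mul_le_mul hT hB (by positivity) (by norm_num)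
    _ ≤ 9 * εd / (m * n) := by rw [mul_div_assoc]; linarith

/-- The margins of the corrected unlearned network `θ̃` on the retained data
points differ from those of the original network by at most `9 εd/(mn)` in absolute value. -/
theorem stmt_16
    (n d m : ℕ)
    (ε δ εd ψ φ : ℝ)
    (hεdpos : 0 < εd) (hεdle : εd ≤ 0.4)
    (hεpos : 0 < ε) (hεle : ε ≤ 0.4)
    (hδpos : 0 < δ) (hδle : δ ≤ 0.4)
    (hψ : ψ ≤ 0.1) (hφ : φ ≤ εd / (4 * m * n))
    (u : Fin n → ℝ)
    (hu : ∀ j, u j = -(1 / Real.sqrt n) ∨ u j = 1 / Real.sqrt n)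
    (x : Fin m → EuclideanSpace ℝ (Fin d)) (y : Fin m → ℝ)
    (hy : ∀ i, y i = 1 ∨ y i = -1)
    (hnorm : ∀ i, 1 - ψ ≤ ‖x i‖ ^ 2 ∧ ‖x i‖ ^ 2 ≤ 1 + ψ)
    (hortho : ∀ i j, i ≠ j → |(inner ℝ (x i) (x j) : ℝ)| ≤ φ)
    (θ : Fin n → EuclideanSpace ℝ (Fin d)) (lam : Fin m → ℝ)
    (hlam : ∀ i, 0 ≤ lam i)
    (hstat : Real.sqrt (∑ j, ‖θ j - u j • ∑ i, (lam i * y i * act (θ j) (x i)) • x i‖ ^ 2) ≤ ε)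
    (hcs : ∀ i, lam i * (y i * net u θ (x i) - 1) ≤ δ)
    (hpf : ∀ i, 1 ≤ y i * net u θ (x i))
    (l : Fin m)
    (θt : Fin n → EuclideanSpace ℝ (Fin d))
    (hθt : ∀ j, θt j = (θ j - (u j * lam l * y l * act (θ j) (x l)) • x l) +
        (|u j| * lam l * act (θ j) (x l)) •
          ((εd / (2 * m * n)) •
            ∑ k ∈ Finset.univ.erase l, sgn ((inner ℝ (x k) (θ j) : ℝ)) • x k)) :
    ∀ r, r ≠ l →
      -(9 * εd / (m * n)) ≤ y r * (net u θt (x r) - net u θ (x r)) ∧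
      y r * (net u θt (x r) - net u θ (x r)) ≤ 9 * εd / (m * n) :=
  stmt_16_general n d m ε δ εd ψ φ hεdpos hεdle hεle hδle hψ hφ u hu x y hy hnorm hortho θ lam hlam
    hstat hcs l θt hθt
end
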